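/- The general solution of the ODE −S''(s) − (s/(1+s²)) S'(s) − (2/(1+s²)²) S(s) = 1 with initial conditions S(0) = c₁, S'(0) = c₂ is S(s) = (c₁ − s²/4) + (s/√(1+s²))·(c₂ − (c₁ + 1/4)·arcsinh(s)). In particular, this formula defines a function satisfying the ODE for all s ∈ ℝ. -/

import Mathlib

/-!
Write `r = √(1 + s²)` and `ψ = s / r`. The formula is
`S = -(1 + s²)/4 + c₂ ψ + (c₁ + 1/4) (1 - ψ arsinh s)`: a particular solution plus the two
rotationally symmetric Jacobi fields of the catenoid (from vertical translations and from
dilations). Since `r' = s / r` and `arsinh' = 1 / r`, both derivatives of `S` are explicit, and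
the equation reduces to an identity of rational functions in `s`, `r` and `arsinh s`.
-/

open Real

theorem hasDerivAt_sqrt_one_add_sq (s : ℝ) :
    HasDerivAt (fun x => √(1 + x ^ 2)) (s / √(1 + s ^ 2)) s := by
  refine (((hasDerivAt_pow 2 s).const_add 1).sqrt (by positivity)).congr_deriv ?_
  field_simp
  ring

noncomputable def jacobiSolution (c₁ c₂ s : ℝ) : ℝ :=
  (c₁ - s ^ 2 / 4) + (s / √(1 + s ^ 2)) * (c₂ - (c₁ + 1 / 4) * arsinh s)

noncomputable def jacobiSolutionDeriv (c₁ c₂ s : ℝ) : ℝ :=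
  -s / 2 + (c₂ - (c₁ + 1 / 4) * arsinh s) / (√(1 + s ^ 2) * (1 + s ^ 2))
    - (c₁ + 1 / 4) * s / (1 + s ^ 2)

noncomputable def jacobiSolutionDeriv2 (c₁ c₂ s : ℝ) : ℝ :=
  -1 / 2 - 3 * s * (c₂ - (c₁ + 1 / 4) * arsinh s) / (√(1 + s ^ 2) * (1 + s ^ 2) ^ 2)
    + (c₁ + 1 / 4) * (s ^ 2 - 2) / (1 + s ^ 2) ^ 2

theorem hasDerivAt_jacobiSolution (c₁ c₂ s : ℝ) :
    HasDerivAt (jacobiSolution c₁ c₂) (jacobiSolutionDeriv c₁ c₂ s) s := by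
  have hr2 : √(1 + s ^ 2) ^ 2 = 1 + s ^ 2 := sq_sqrt (by positivity)
  have hquad := ((hasDerivAt_pow 2 s).div_const 4).const_sub c₁
  have hψ := (hasDerivAt_id' s).fun_div (hasDerivAt_sqrt_one_add_sq s) (by positivity)
  have hg := ((hasDerivAt_arsinh s).const_mul (c₁ + 1 / 4)).const_sub c₂
  refine (hquad.add (hψ.fun_mul hg)).congr_deriv ?_
  unfold jacobiSolutionDeriv
  field_simp
  linear_combination (s ^ 2 * (8 * c₂ - (8 * c₁ + 2) * arsinh s)
    + (8 * c₁ + 2) * s * √(1 + s ^ 2)) * hr2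

theorem hasDerivAt_jacobiSolutionDeriv (c₁ c₂ s : ℝ) :
    HasDerivAt (jacobiSolutionDeriv c₁ c₂) (jacobiSolutionDeriv2 c₁ c₂ s) s := by
  have hr2 : √(1 + s ^ 2) ^ 2 = 1 + s ^ 2 := sq_sqrt (by positivity)
  have hq := (hasDerivAt_pow 2 s).const_add 1
  have hg := ((hasDerivAt_arsinh s).const_mul (c₁ + 1 / 4)).const_sub c₂
  have hfrac := hg.fun_div ((hasDerivAt_sqrt_one_add_sq s).fun_mul hq) (by positivity)
  have hrat := ((hasDerivAt_id' s).const_mul (c₁ + 1 / 4)).fun_div hq (by positivity)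
  refine ((((hasDerivAt_id' s).neg.div_const 2).add hfrac).sub hrat).congr_deriv ?_
  unfold jacobiSolutionDeriv2
  field_simp
  linear_combination (s * (8 * c₂ - (8 * c₁ + 2) * arsinh s) + (8 * c₁ + 2) * √(1 + s ^ 2)) * hr2

theorem jacobiSolution_ode (c₁ c₂ s : ℝ) :
    -jacobiSolutionDeriv2 c₁ c₂ s - s / (1 + s ^ 2) * jacobiSolutionDeriv c₁ c₂ s
      - 2 / (1 + s ^ 2) ^ 2 * jacobiSolution c₁ c₂ s = 1 := by
  unfold jacobiSolution jacobiSolutionDeriv jacobiSolutionDeriv2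
  field_simp
  ring

/-- The solution of the ODE `−S'' − (s/(1+s²)) S' − (2/(1+s²)²) S = 1` with
`S(0) = c₁`, `S'(0) = c₂` is
`S(s) = (c₁ − s²/4) + (s/√(1+s²))·(c₂ − (c₁ + 1/4)·arcsinh s)`; in particular this
formula satisfies the ODE for all `s ∈ ℝ`. -/
theorem jacobi_ode_general_solution (c₁ c₂ : ℝ) (S : ℝ → ℝ)
    (hS : S = fun s => (c₁ - s ^ 2 / 4) +
      (s / Real.sqrt (1 + s ^ 2)) * (c₂ - (c₁ + 1 / 4) * Real.arsinh s)) :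
    S 0 = c₁ ∧ deriv S 0 = c₂ ∧
    ∀ s : ℝ, -(deriv (deriv S) s) - (s / (1 + s ^ 2)) * deriv S s
        - (2 / (1 + s ^ 2) ^ 2) * S s = 1 := by
  obtain rfl : S = jacobiSolution c₁ c₂ := hS
  have hderiv : deriv (jacobiSolution c₁ c₂) = jacobiSolutionDeriv c₁ c₂ :=
    funext fun s => (hasDerivAt_jacobiSolution c₁ c₂ s).deriv
  have hderiv2 : deriv (jacobiSolutionDeriv c₁ c₂) = jacobiSolutionDeriv2 c₁ c₂ :=
    funext fun s => (hasDerivAt_jacobiSolutionDeriv c₁ c₂ s).deriv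
  refine ⟨by simp [jacobiSolution], by simp [hderiv, jacobiSolutionDeriv], fun s => ?_⟩
  rw [hderiv, hderiv2]
  exact jacobiSolution_ode c₁ c₂ s
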